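/- Let p be a prime, L a field of characteristic p, R = L[x_1,…,x_n] with an ℕ-grading (deg x_i = w_i > 0), and f ∈ m homogeneous of degree d with λ := (Σ w_i)/d ≤ 1. Suppose e ≥ 1 satisfies (p^e − 1)·λ ∈ ℕ, and let g be a polynomial all of whose monomials have degree at least d+1. Then (f+g)^{p^e⟨λ⟩_e} ≡ f^{p^e⟨λ⟩_e} modulo the ideal (x_1^{p^e},…,x_n^{p^e}). -/

import Mathlib

open MvPolynomial

/-- The `e`-th truncation of the non-terminating base `p` expansion of `α ∈ (0,1]`:
the unique multiple of `p^{-e}` with `⟨α⟩_e < α ≤ ⟨α⟩_e + p^{-e}`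
(with the convention `⟨α⟩_e = 0` for `α ≤ 0`). -/
noncomputable def trunc (p e : ℕ) (α : ℝ) : ℝ :=
  if α ≤ 0 then 0 else (⌈α * (p : ℝ) ^ e⌉ - 1) / (p : ℝ) ^ e

/-- The `e`-th digit (`e ≥ 1`) of the non-terminating base `p` expansion of `α ∈ (0,1]`,
namely `p^e ⟨α⟩_e - p^e ⟨α⟩_{e-1}`. -/
noncomputable def digit (p e : ℕ) (α : ℝ) : ℤ :=
  (⌈α * (p : ℝ) ^ e⌉ - 1) - p * (⌈α * (p : ℝ) ^ (e - 1)⌉ - 1)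

/-- Least positive residue of `m` modulo `b`: the unique `r` with `1 ≤ r ≤ b`, `r ≡ m (mod b)`. -/
def lpr (m b : ℤ) : ℤ := if m % b = 0 then b else m % b

/-- The `e`-th Frobenius power `m^{[p^e]} = (x_1^{p^e}, …, x_n^{p^e})`. -/
noncomputable def frobPow (p n : ℕ) (K : Type*) [Field K] (e : ℕ) :
    Ideal (MvPolynomial (Fin n) K) :=
  Ideal.span (Set.range fun i => (X i : MvPolynomial (Fin n) K) ^ p ^ e)

/-- `ν_f(p^e) = max { N | f^N ∉ m^{[p^e]} }`. -/
noncomputable def nu (p : ℕ) {n : ℕ} {K : Type*} [Field K]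
    (f : MvPolynomial (Fin n) K) (e : ℕ) : ℕ :=
  sSup {N : ℕ | f ^ N ∉ frobPow p n K e}

/-- The F-pure threshold `fpt(f) = lim_e ν_f(p^e)/p^e`; since the sequence is
non-decreasing and bounded, the limit equals the supremum. -/
noncomputable def fpt (p : ℕ) {n : ℕ} {K : Type*} [Field K]
    (f : MvPolynomial (Fin n) K) : ℝ :=
  ⨆ e : ℕ, (nu p f e : ℝ) / (p : ℝ) ^ e

/-- The maximal ideal `m = (x_1, …, x_n)`. -/
noncomputable def mIdeal (n : ℕ) (K : Type*) [Field K] : Ideal (MvPolynomial (Fin n) K) :=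
  Ideal.span (Set.range (X : Fin n → MvPolynomial (Fin n) K))

/-! Since `(p^e - 1)λ = k ∈ ℕ` and `0 < λ ≤ 1`, one has `p^e ⟨λ⟩_e = k`, so `N d + Σ wᵢ = p^e Σ wᵢ`.
Every term `f^j g^(N-j)`, `j < N`, of `(f + g)^N - f^N` only has monomials of weight at least
`N d + 1`, whereas a monomial with all exponents below `p^e` has weight at most
`(p^e - 1) Σ wᵢ = N d`; so each such monomial is divisible by some `xᵢ^(p^e)`. -/

open Finsupp

section WeightLowerBound

variable {σ R : Type*} [CommSemiring R] (w : σ → ℕ)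

theorem le_weight_of_mem_support_mul {a b : MvPolynomial σ R} {c₁ c₂ : ℕ}
    (ha : ∀ u ∈ a.support, c₁ ≤ weight w u) (hb : ∀ u ∈ b.support, c₂ ≤ weight w u) :
    ∀ u ∈ (a * b).support, c₁ + c₂ ≤ weight w u := by
  classical
  intro u hu
  obtain ⟨x, hx, y, hy, rfl⟩ := Finset.mem_add.mp (support_mul a b hu)
  rw [map_add]
  exact add_le_add (ha x hx) (hb y hy)

theorem le_weight_of_mem_support_pow {a : MvPolynomial σ R} {c : ℕ}
    (ha : ∀ u ∈ a.support, c ≤ weight w u) (m : ℕ) :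
    ∀ u ∈ (a ^ m).support, m * c ≤ weight w u := by
  induction m with
  | zero => simp
  | succ m ih => simpa [pow_succ, add_one_mul] using le_weight_of_mem_support_mul w ih ha

end WeightLowerBound

section FrobeniusPower

variable {p n e : ℕ} {K : Type*} [Field K]

theorem mem_frobPow_iff {h : MvPolynomial (Fin n) K} :
    h ∈ frobPow p n K e ↔ ∀ u ∈ h.support, ∃ i, p ^ e ≤ u i := by
  have hgen : Set.range (fun i => (X i : MvPolynomial (Fin n) K) ^ p ^ e) =
      (fun s => monomial s 1) '' Set.range fun i => single i (p ^ e) := by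
    rw [← Set.range_comp]
    simp [Function.comp_def, X_pow_eq_monomial]
  rw [frobPow, hgen, mem_ideal_span_monomial_image]
  simp [single_le_iff]

theorem mem_frobPow_of_forall_lt_weight (w : Fin n → ℕ) {h : MvPolynomial (Fin n) K}
    (hh : ∀ u ∈ h.support, p ^ e * ∑ i, w i < weight w u + ∑ i, w i) :
    h ∈ frobPow p n K e := by
  refine mem_frobPow_iff.mpr fun u hu => ?_
  by_contra! hlt
  refine (hh u hu).not_ge ?_
  rw [weight_eq_sum, ← Finset.sum_add_distrib, Finset.mul_sum]
  exact Finset.sum_le_sum fun i _ => by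
    simpa [add_one_mul] using Nat.mul_le_mul_right (w i) (hlt i)

theorem add_pow_sub_pow_mem_frobPow (w : Fin n → ℕ) {f g : MvPolynomial (Fin n) K} {d N : ℕ}
    (hf : ∀ u ∈ f.support, d ≤ weight w u) (hg : ∀ u ∈ g.support, d + 1 ≤ weight w u)
    (hN : p ^ e * ∑ i, w i ≤ N * d + ∑ i, w i) :
    (f + g) ^ N - f ^ N ∈ frobPow p n K e := by
  rw [add_pow, Finset.sum_range_succ, Nat.sub_self, pow_zero, mul_one, Nat.choose_self,
    Nat.cast_one, mul_one, add_sub_cancel_right]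
  refine Ideal.sum_mem _ fun j hj => mem_frobPow_of_forall_lt_weight w fun u hu => ?_
  have hjN : j < N := Finset.mem_range.mp hj
  have hdeg : j * d + (N - j) * (d + 1) + 0 ≤ weight w u :=
    le_weight_of_mem_support_mul w
      (le_weight_of_mem_support_mul w (le_weight_of_mem_support_pow w hf j)
        (le_weight_of_mem_support_pow w hg (N - j)))
      (fun _ _ => Nat.zero_le _) u hu
  have hsplit : j * d + (N - j) * (d + 1) = N * d + (N - j) := by
    obtain ⟨m, rfl⟩ := Nat.exists_eq_add_of_le hjN.le
    rw [Nat.add_sub_cancel_left]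
    ring
  omega

end FrobeniusPower

theorem pow_mul_trunc_eq_of_sub_one_mul_eq {p e k : ℕ} {lam : ℝ} (h0 : 0 ≤ lam) (h1 : lam ≤ 1)
    (hk : ((p : ℝ) ^ e - 1) * lam = k) : (p : ℝ) ^ e * trunc p e lam = k := by
  rcases h0.eq_or_lt with rfl | hpos
  · simp [trunc, ← hk]
  have hpe : (p : ℝ) ^ e ≠ 0 := by
    intro hpe
    rw [hpe] at hk
    linarith [(k.cast_nonneg : (0 : ℝ) ≤ k)]
  have hceil : ⌈lam * (p : ℝ) ^ e⌉ = k + 1 := by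
    have hlam : ⌈lam⌉ = 1 :=
      le_antisymm (Int.ceil_le.mpr (by simpa using h1)) (Int.ceil_pos.mpr hpos)
    rw [show lam * (p : ℝ) ^ e = lam + k by rw [← hk]; ring, Int.ceil_add_natCast, hlam, add_comm]
  rw [trunc, if_neg hpos.not_ge, hceil]
  push_cast
  field_simp
  ring

theorem stmt_12_general (p : ℕ) (n : ℕ) (K : Type*) [Field K]
    (w : Fin n → ℕ) (d : ℕ)
    (f : MvPolynomial (Fin n) K)
    (hfh : f.IsWeightedHomogeneous w d)
    (lam : ℝ) (hlam : lam = (∑ i, (w i : ℝ)) / d) (hlam1 : lam ≤ 1)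
    (e : ℕ) (hnat : ∃ k : ℕ, ((p : ℝ) ^ e - 1) * lam = k)
    (g : MvPolynomial (Fin n) K)
    (hg : ∀ u ∈ g.support, d + 1 ≤ ∑ i, u i * w i)
    (N : ℕ) (hN : (N : ℝ) = (p : ℝ) ^ e * trunc p e lam) :
    (f + g) ^ N - f ^ N ∈ frobPow p n K e := by
  obtain ⟨k, hk⟩ := hnat
  obtain rfl : N = k := by
    exact_mod_cast hN.trans (pow_mul_trunc_eq_of_sub_one_mul_eq (by rw [hlam]; positivity) hlam1 hk)
  rcases Nat.eq_zero_or_pos d with rfl | hd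
  · simp only [hlam, CharP.cast_eq_zero, div_zero, mul_zero] at hk
    rw [Nat.cast_eq_zero.mp hk.symm, pow_zero, pow_zero, sub_self]
    exact zero_mem _
  have hdeg : (N : ℝ) * d + ∑ i, (w i : ℝ) = (p : ℝ) ^ e * ∑ i, (w i : ℝ) := by
    rw [← hk, hlam]
    field_simp
    ring
  refine add_pow_sub_pow_mem_frobPow w
    (fun u hu => (hfh (MvPolynomial.mem_support_iff.mp hu)).ge)
    (fun u hu => by simpa [weight_eq_sum] using hg u hu) ?_
  exact_mod_cast hdeg.ge

/-- if `λ = (Σ w_i)/d ≤ 1`, `(p^e − 1)λ ∈ ℕ` and every monomial of `g`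
has degree `≥ d + 1`, then `(f+g)^{p^e⟨λ⟩_e} ≡ f^{p^e⟨λ⟩_e} mod m^{[p^e]}`. -/
theorem stmt_12 (p : ℕ) (hp : p.Prime) (n : ℕ) (K : Type*) [Field K] [CharP K p]
    (w : Fin n → ℕ) (hw : ∀ i, 0 < w i) (d : ℕ)
    (f : MvPolynomial (Fin n) K) (hf0 : f ≠ 0)
    (hfh : f.IsWeightedHomogeneous w d) (hfm : f ∈ mIdeal n K)
    (lam : ℝ) (hlam : lam = (∑ i, (w i : ℝ)) / d) (hlam1 : lam ≤ 1)
    (e : ℕ) (he : 1 ≤ e) (hnat : ∃ k : ℕ, ((p : ℝ) ^ e - 1) * lam = k)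
    (g : MvPolynomial (Fin n) K)
    (hg : ∀ u ∈ g.support, d + 1 ≤ ∑ i, u i * w i)
    (N : ℕ) (hN : (N : ℝ) = (p : ℝ) ^ e * trunc p e lam) :
    (f + g) ^ N - f ^ N ∈ frobPow p n K e :=
  stmt_12_general p n K w d f hfh lam hlam hlam1 e hnat g hg N hN
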